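/- arXiv:2510.22701 — 2 statements merged into one kernel-verified Lean document; each statement's English description precedes it below -/
import Mathlib

section
/- Let d > 1 and r ∈ ℕ. There is a constant C > 0, depending only on d and r, such that for all n, all positive integers κ_n ≤ n − 1, and all 1 ≤ k ≤ m_n: E[V_{n,k}^r] ≤ C (n − k + 1)^{−2r/d}. -/
/-!
Since `V_{n,k}^r = (Ξ_k / d)^{2r} (X_k - E X_k)^{2r}`, the two factors are bounded separately.
Rescaling `X_k` to rate one gives `E[(X_k - E X_k)^{2r}] = c_r N^{-4r}` with `N = n - k + 1`.
For `Ξ_k`, comparing `1/j²` with `1/(j(j+1))` gives `E Y_i ≥ 1/(n-i+1) - 1/(n+1)`, hence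
`(E Y_i)^{1/d-1} ≤ N^{1-1/d} + N^{2-2/d} i^{1/d-1}`; summing over the at most `N` indices
`k ≤ i ≤ m_n` yields `Ξ_k ≤ (1 + d) N^{2-1/d}`, and the exponents combine to `-2r/d`.
-/

open MeasureTheory ProbabilityTheory Filter Real
open scoped ProbabilityTheory ENNReal
open Set

namespace ProbabilityTheory

variable {r : ℝ}

lemma expMeasure_eq_withDensity : expMeasure r = volume.withDensity (exponentialPDF r) := rfl

lemma exponentialPDF_toReal_mul (hr : 0 < r) (g : ℝ → ℝ) (x : ℝ) :
    (exponentialPDF r x).toReal * g x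
      = (Ici 0).indicator (fun x => r * exp (-(r * x)) * g x) x := by
  rw [exponentialPDF, ENNReal.toReal_ofReal (exponentialPDFReal_nonneg hr x), exponentialPDFReal,
    gammaPDFReal]
  by_cases hx : 0 ≤ x <;> simp [hx]

lemma integral_expMeasure (hr : 0 < r) (g : ℝ → ℝ) :
    ∫ x, g x ∂expMeasure r = ∫ x in Ioi 0, r * exp (-(r * x)) * g x := by
  rw [expMeasure_eq_withDensity, ← integral_Ici_eq_integral_Ioi,
    ← integral_indicator measurableSet_Ici,
    integral_withDensity_eq_integral_toReal_smul (f := exponentialPDF r)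
      (measurable_exponentialPDFReal r).ennreal_ofReal (ae_of_all _ fun _ => ENNReal.ofReal_lt_top)]
  exact integral_congr_ae (ae_of_all _ (exponentialPDF_toReal_mul hr g))

lemma integrable_expMeasure_iff (hr : 0 < r) {g : ℝ → ℝ} :
    Integrable g (expMeasure r) ↔ IntegrableOn (fun x => r * exp (-(r * x)) * g x) (Ioi 0) := by
  rw [expMeasure_eq_withDensity, ← integrableOn_Ici_iff_integrableOn_Ioi,
    ← integrable_indicator_iff measurableSet_Ici,
    integrable_withDensity_iff_integrable_smul' (f := exponentialPDF r)
      (measurable_exponentialPDFReal r).ennreal_ofReal (ae_of_all _ fun _ => ENNReal.ofReal_lt_top)]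
  exact integrable_congr (ae_of_all _ (exponentialPDF_toReal_mul hr g))

lemma integrable_id_expMeasure (hr : 0 < r) : Integrable id (expMeasure r) := by
  rw [integrable_expMeasure_iff hr]
  have h := integrableOn_rpow_mul_exp_neg_mul_rpow (s := 1) (p := 1) (by norm_num) one_pos hr
  refine IntegrableOn.congr_fun (h.const_mul r) (fun x _ => ?_) measurableSet_Ioi
  simp only [rpow_one, id]
  ring_nf

lemma integral_id_expMeasure (hr : 0 < r) : ∫ x, x ∂expMeasure r = r⁻¹ := by
  have h := integral_rpow_mul_exp_neg_mul_Ioi two_pos hr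
  norm_num at h
  calc ∫ x, x ∂expMeasure r = r * ∫ x in Ioi 0, x * exp (-(r * x)) := by
        rw [integral_expMeasure hr, ← integral_const_mul]
        exact setIntegral_congr_fun measurableSet_Ioi fun x _ => by ring
    _ = r⁻¹ := by rw [h]; field_simp

lemma integral_expMeasure_eq_integral_comp_mul (hr : 0 < r) (g : ℝ → ℝ) :
    ∫ x, g x ∂expMeasure r = ∫ y, g (r⁻¹ * y) ∂expMeasure 1 := by
  have h := integral_comp_mul_left_Ioi (fun y => exp (-y) * g (r⁻¹ * y)) 0 hr
  simp only [mul_zero, smul_eq_mul, inv_mul_cancel_left₀ hr.ne'] at h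
  rw [integral_expMeasure hr, integral_expMeasure one_pos]
  calc ∫ x in Ioi 0, r * exp (-(r * x)) * g x = r * ∫ x in Ioi 0, exp (-(r * x)) * g x := by
        rw [← integral_const_mul]
        exact setIntegral_congr_fun measurableSet_Ioi fun x _ => by ring
    _ = ∫ y in Ioi 0, 1 * exp (-(1 * y)) * g (r⁻¹ * y) := by
        rw [h, mul_inv_cancel_left₀ hr.ne']
        simp only [one_mul]

lemma integral_sub_inv_pow_expMeasure (hr : 0 < r) (p : ℕ) :
    ∫ x, (x - r⁻¹) ^ p ∂expMeasure r = (∫ y, (y - 1) ^ p ∂expMeasure 1) / r ^ p := by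
  rw [integral_expMeasure_eq_integral_comp_mul hr, div_eq_inv_mul, ← inv_pow,
    ← integral_const_mul]
  congr with y
  rw [← mul_pow]
  ring

section HasLaw

variable {Ω : Type*} {mΩ : MeasurableSpace Ω} {P : Measure Ω} {X : Ω → ℝ}

lemma integrable_of_hasLaw_expMeasure (hX : HasLaw X (expMeasure r) P) (hr : 0 < r) :
    Integrable X P :=
  (hX.map_eq ▸ integrable_id_expMeasure hr).comp_aemeasurable hX.aemeasurable

lemma integral_of_hasLaw_expMeasure (hX : HasLaw X (expMeasure r) P) (hr : 0 < r) :
    ∫ ω, X ω ∂P = r⁻¹ := by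
  rw [← integral_id_expMeasure hr]
  exact hX.integral_eq

lemma integral_sub_inv_pow_of_hasLaw_expMeasure (hX : HasLaw X (expMeasure r) P) (hr : 0 < r)
    (p : ℕ) :
    ∫ ω, (X ω - r⁻¹) ^ p ∂P = (∫ y, (y - 1) ^ p ∂expMeasure 1) / r ^ p := by
  rw [← integral_sub_inv_pow_expMeasure hr p]
  exact hX.integral_comp (f := fun x => (x - r⁻¹) ^ p) (by fun_prop)

lemma integral_finsetSum_of_hasLaw_expMeasure {ι : Type*} {s : Finset ι} {Z : ι → Ω → ℝ}
    {rate : ι → ℝ} (hZ : ∀ j ∈ s, HasLaw (Z j) (expMeasure (rate j)) P)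
    (hrate : ∀ j ∈ s, 0 < rate j) :
    ∫ ω, ∑ j ∈ s, Z j ω ∂P = ∑ j ∈ s, (rate j)⁻¹ := by
  rw [integral_finsetSum _ fun j hj => integrable_of_hasLaw_expMeasure (hZ j hj) (hrate j hj)]
  exact Finset.sum_congr rfl fun j hj => integral_of_hasLaw_expMeasure (hZ j hj) (hrate j hj)

end HasLaw

end ProbabilityTheory

lemma sum_range_rpow_sub_one_le {s : ℝ} (hs0 : 0 < s) (hs1 : s ≤ 1) (N : ℕ) :
    ∑ i ∈ Finset.range N, ((i : ℝ) + 1) ^ (s - 1) ≤ (N : ℝ) ^ s / s := by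
  -- concavity of `x ^ s`, through Bernoulli's inequality `(i / (i + 1)) ^ s ≤ 1 - s / (i + 1)`
  have step (i : ℕ) : s * ((i : ℝ) + 1) ^ (s - 1) ≤ ((i : ℝ) + 1) ^ s - (i : ℝ) ^ s := by
    have hi : (0 : ℝ) < i + 1 := by positivity
    have bern := rpow_one_add_le_one_add_mul_self (s := -((i : ℝ) + 1)⁻¹)
      (by rw [neg_le_neg_iff]; exact inv_le_one_of_one_le₀ (by linarith)) hs0.le hs1
    rw [show 1 + -((i : ℝ) + 1)⁻¹ = i / (i + 1) by field_simp; ring,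
      div_rpow (Nat.cast_nonneg i) hi.le, div_le_iff₀ (rpow_pos_of_pos hi s)] at bern
    rw [rpow_sub_one hi.ne']
    linear_combination bern
  rw [le_div_iff₀ hs0, Finset.sum_mul]
  calc ∑ i ∈ Finset.range N, ((i : ℝ) + 1) ^ (s - 1) * s
      ≤ ∑ i ∈ Finset.range N, (((i + 1 : ℕ) : ℝ) ^ s - (i : ℝ) ^ s) :=
        Finset.sum_le_sum fun i _ => by push_cast; linarith [step i]
    _ = (N : ℝ) ^ s := by
        rw [Finset.sum_range_sub (fun i : ℕ => (i : ℝ) ^ s)]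
        simp [zero_rpow hs0.ne']

lemma sum_Ico_rpow_sub_one_le {s : ℝ} (hs0 : 0 < s) (hs1 : s ≤ 1) {k : ℕ} (hk : 1 ≤ k)
    (N : ℕ) :
    ∑ i ∈ Finset.Ico k (k + N), (i : ℝ) ^ (s - 1) ≤ (N : ℝ) ^ s / s := by
  rw [Finset.sum_Ico_eq_sum_range, Nat.add_sub_cancel_left]
  refine le_trans (Finset.sum_le_sum fun i _ => ?_) (sum_range_rpow_sub_one_le hs0 hs1 N)
  have hk' : (1 : ℝ) ≤ k := by exact_mod_cast hk
  exact rpow_le_rpow_of_nonpos (by positivity) (by push_cast; linarith) (by linarith)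

lemma rpow_sub_one_le_of_inv_sub_inv_le {s a b N E : ℝ} (hs0 : 0 < s) (hs1 : s ≤ 1) (ha : 0 < a)
    (hb : 0 < b) (haN : a ≤ N) (hE : a⁻¹ - (a + b)⁻¹ ≤ E) :
    E ^ (s - 1) ≤ N ^ (1 - s) + N ^ (2 * (1 - s)) * b ^ (s - 1) := by
  have hc : 0 < a + a ^ 2 / b := by positivity
  have hE' : (a + a ^ 2 / b)⁻¹ ≤ E := by
    convert hE using 1
    field_simp
    ring
  calc E ^ (s - 1) ≤ ((a + a ^ 2 / b)⁻¹) ^ (s - 1) :=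
        rpow_le_rpow_of_nonpos (inv_pos.2 hc) hE' (by linarith)
    _ = (a + a ^ 2 / b) ^ (1 - s) := by rw [inv_rpow hc.le, ← rpow_neg hc.le, neg_sub]
    _ ≤ a ^ (1 - s) + (a ^ 2 / b) ^ (1 - s) :=
        rpow_add_le_add_rpow ha.le (by positivity) (by linarith) (by linarith)
    _ ≤ N ^ (1 - s) + (N ^ 2 / b) ^ (1 - s) := by gcongr
    _ = N ^ (1 - s) + N ^ (2 * (1 - s)) * b ^ (s - 1) := by
        have hN : 0 ≤ N := ha.le.trans haN
        rw [div_rpow (by positivity) hb.le, ← rpow_natCast, ← rpow_mul hN, div_eq_mul_inv,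
          ← rpow_neg hb.le, neg_sub]
        norm_num

lemma inv_sub_inv_le_sum_inv_sq {n : ℕ} : ∀ {i : ℕ}, i ≤ n →
    ((n - i + 1 : ℕ) : ℝ)⁻¹ - ((n : ℝ) + 1)⁻¹
      ≤ ∑ j ∈ Finset.Icc 1 i, (((n - j + 1 : ℕ) : ℝ) ^ 2)⁻¹
  | 0, _ => by simp
  | i + 1, hi => by
    rw [Finset.sum_Icc_succ_top (by omega), show n - (i + 1) + 1 = n - i by omega]
    have ih := inv_sub_inv_le_sum_inv_sq (n := n) (i := i) (by omega)
    set a : ℝ := ((n - i : ℕ) : ℝ) with ha_def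
    have ha : 1 ≤ a := by rw [ha_def]; exact_mod_cast (by omega : 1 ≤ n - i)
    have hcast : ((n - i + 1 : ℕ) : ℝ) = a + 1 := by push_cast; rfl
    rw [hcast] at ih
    have step : a⁻¹ - (a + 1)⁻¹ ≤ (a ^ 2)⁻¹ := by
      rw [inv_sub_inv (by positivity) (by positivity), div_eq_mul_inv]
      simp only [add_sub_cancel_left, one_mul]
      exact inv_anti₀ (by positivity) (by nlinarith)
    linarith

lemma sum_Icc_rpow_sub_one_le_of_inv_sub_inv_le {s : ℝ} (hs0 : 0 < s) (hs1 : s ≤ 1)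
    {n k m : ℕ} (hk : 1 ≤ k) (hm : m ≤ n) {E : ℕ → ℝ}
    (hE : ∀ i ∈ Finset.Icc k m, ((n - i + 1 : ℕ) : ℝ)⁻¹ - ((n : ℝ) + 1)⁻¹ ≤ E i) :
    ∑ i ∈ Finset.Icc k m, E i ^ (s - 1)
      ≤ (1 + 1 / s) * ((n - k + 1 : ℕ) : ℝ) ^ (2 - s) := by
  set N : ℝ := ((n - k + 1 : ℕ) : ℝ) with hN_def
  have hN : 0 < N := by positivity
  let f : ℕ → ℝ := fun i => N ^ (1 - s) + N ^ (2 * (1 - s)) * (i : ℝ) ^ (s - 1)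
  have hterm : ∀ i ∈ Finset.Icc k m, E i ^ (s - 1) ≤ f i := by
    intro i hi
    obtain ⟨hki, him⟩ := Finset.mem_Icc.1 hi
    refine rpow_sub_one_le_of_inv_sub_inv_le (a := ((n - i + 1 : ℕ) : ℝ)) hs0 hs1
      (by positivity) (by exact_mod_cast (by omega : 0 < i))
      (by rw [hN_def]; exact_mod_cast (by omega)) ?_
    convert hE i hi using 3
    push_cast [show i ≤ n by omega]
    ring
  calc ∑ i ∈ Finset.Icc k m, E i ^ (s - 1)
      ≤ ∑ i ∈ Finset.Icc k m, f i := Finset.sum_le_sum hterm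
    _ ≤ ∑ i ∈ Finset.Ico k (k + (n - k + 1)), f i := by
        refine Finset.sum_le_sum_of_subset_of_nonneg ?_ fun i _ _ => by positivity
        intro i hi
        simp only [Finset.mem_Icc, Finset.mem_Ico] at hi ⊢
        omega
    _ = N * N ^ (1 - s)
          + N ^ (2 * (1 - s)) * ∑ i ∈ Finset.Ico k (k + (n - k + 1)), (i : ℝ) ^ (s - 1) := by
        rw [Finset.sum_add_distrib, Finset.sum_const, Nat.card_Ico, ← Finset.mul_sum,
          nsmul_eq_mul, Nat.add_sub_cancel_left]
    _ ≤ N * N ^ (1 - s) + N ^ (2 * (1 - s)) * (N ^ s / s) := by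
        gcongr
        exact sum_Ico_rpow_sub_one_le hs0 hs1 hk _
    _ = (1 + 1 / s) * N ^ (2 - s) := by
        rw [mul_div_assoc', ← rpow_add hN, ← rpow_one_add' hN.le (by linarith)]
        field_simp
        ring_nf

lemma rpow_two_sub_inv_pow {N : ℝ} (hN : 0 < N) (d : ℝ) (r : ℕ) :
    (N ^ (2 - 1 / d)) ^ (2 * r) = N ^ (-(2 * r : ℝ) / d) * N ^ (4 * r) := by
  rw [← rpow_natCast, ← rpow_natCast N, ← rpow_mul hN.le, ← rpow_add hN]
  congr 1
  push_cast
  field_simp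
  ring

theorem stmt_9_general
    (d : ℝ) (hd : 1 < d) (r : ℕ)
    (Ω : ℕ → Type) [∀ n, MeasureSpace (Ω n)]
    (X : (n : ℕ) → ℕ → Ω n → ℝ)
    (hXmeas : ∀ n i, Measurable (X n i))
    (hXlaw : ∀ n i, 1 ≤ i → i ≤ n →
      Measure.map (X n i) ℙ = expMeasure (((n - i + 1 : ℕ) : ℝ) ^ 2))
    (Y : (n : ℕ) → ℕ → Ω n → ℝ)
    (hY : ∀ n k o, Y n k o = ∑ i ∈ Finset.Icc 1 k, X n i o)
    (Ξ : (n : ℕ) → ℕ → ℕ → ℝ)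
    (hΞ : ∀ n κ k, Ξ n κ k = ∑ i ∈ Finset.Icc k (n - κ),
      (∫ o, Y n i o ∂(ℙ : Measure (Ω n))) ^ (1/d - 1))
    (V : (n : ℕ) → ℕ → ℕ → Ω n → ℝ)
    (hV : ∀ n κ k o, V n κ k o = (Ξ n κ k) ^ 2 / d ^ 2
      * (X n k o - ∫ o', X n k o' ∂(ℙ : Measure (Ω n))) ^ 2) :
    ∃ C : ℝ, 0 < C ∧ ∀ n κ k : ℕ, 1 ≤ κ → κ ≤ n - 1 → 1 ≤ k → k ≤ n - κ →
      ∫ o, (V n κ k o) ^ r ∂(ℙ : Measure (Ω n))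
        ≤ C * ((n - k + 1 : ℕ) : ℝ) ^ (-(2 * r : ℝ) / d) := by
  have hd0 : 0 < d := one_pos.trans hd
  set c := ∫ y, (y - 1) ^ (2 * r) ∂expMeasure 1
  have hc : 0 ≤ c := integral_nonneg fun y => (even_two_mul r).pow_nonneg _
  refine ⟨((1 + d) / d) ^ (2 * r) * (c + 1), by positivity, ?_⟩
  intro n κ k _ _ hk hkm
  have hlaw (i : ℕ) (hi : i ∈ Finset.Icc 1 n) :
      HasLaw (X n i) (expMeasure (((n - i + 1 : ℕ) : ℝ) ^ 2)) ℙ :=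
    ⟨(hXmeas n i).aemeasurable, hXlaw n i (Finset.mem_Icc.1 hi).1 (Finset.mem_Icc.1 hi).2⟩
  have hmeanY (i : ℕ) (hi : i ≤ n) :
      ∫ o, Y n i o ∂ℙ = ∑ j ∈ Finset.Icc 1 i, (((n - j + 1 : ℕ) : ℝ) ^ 2)⁻¹ := by
    simp_rw [hY]
    exact integral_finsetSum_of_hasLaw_expMeasure
      (fun j hj => hlaw j (Finset.Icc_subset_Icc_right hi hj)) fun j _ => by positivity
  set N : ℝ := ((n - k + 1 : ℕ) : ℝ)
  have hN : 0 < N := by positivity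
  have hΞle : Ξ n κ k ≤ (1 + d) * N ^ (2 - 1 / d) := by
    have key := sum_Icc_rpow_sub_one_le_of_inv_sub_inv_le (s := 1 / d) (n := n) (m := n - κ)
      (E := fun i => ∫ o, Y n i o ∂ℙ) (by positivity) ((div_le_one hd0).2 hd.le) hk (by omega)
      fun i hi => by
        have hin : i ≤ n := (Finset.mem_Icc.1 hi).2.trans (Nat.sub_le n κ)
        rw [hmeanY i hin]
        exact inv_sub_inv_le_sum_inv_sq hin
    rwa [one_div_one_div, ← hΞ] at key
  have hΞ0 : 0 ≤ Ξ n κ k := by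
    rw [hΞ]
    refine Finset.sum_nonneg fun i hi => rpow_nonneg ?_ _
    rw [hmeanY i ((Finset.mem_Icc.1 hi).2.trans (Nat.sub_le n κ))]
    positivity
  have hXk := hlaw k (Finset.mem_Icc.2 ⟨hk, by omega⟩)
  have hVr : ∫ o, V n κ k o ^ r ∂ℙ = (Ξ n κ k / d) ^ (2 * r) * (c / N ^ (4 * r)) := by
    simp_rw [hV, integral_of_hasLaw_expMeasure hXk (by positivity), mul_pow, ← pow_mul]
    rw [integral_const_mul, integral_sub_inv_pow_of_hasLaw_expMeasure hXk (by positivity)]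
    ring
  rw [hVr]
  calc (Ξ n κ k / d) ^ (2 * r) * (c / N ^ (4 * r))
      ≤ ((1 + d) * N ^ (2 - 1 / d) / d) ^ (2 * r) * ((c + 1) / N ^ (4 * r)) := by
        gcongr
        linarith
    _ = ((1 + d) / d) ^ (2 * r) * (c + 1) * N ^ (-(2 * r : ℝ) / d) := by
        rw [mul_div_right_comm, mul_pow, rpow_two_sub_inv_pow hN]
        field_simp

/-- Lemma: moments of `V_{n,k}`.
Let `d > 1`, `r ∈ ℕ`, `Ξ_k = ∑_{i=k}^{m_n} (E Y_i)^{1/d−1}` and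
`V_{n,k} = (Ξ_k²/d²)(X_k − E X_k)²`, where `m_n = n − κ_n`.  There is `C > 0`
(depending only on `d, r`) such that `E[V_{n,k}^r] ≤ C (n − k + 1)^{−2r/d}` for all
`n`, all `1 ≤ κ_n ≤ n − 1` and all `1 ≤ k ≤ m_n`. -/
theorem stmt_9
    (d : ℝ) (hd : 1 < d) (r : ℕ)
    (Ω : ℕ → Type) [∀ n, MeasureSpace (Ω n)]
    (hprob : ∀ n, IsProbabilityMeasure (ℙ : Measure (Ω n)))
    (X : (n : ℕ) → ℕ → Ω n → ℝ)
    (hXmeas : ∀ n i, Measurable (X n i))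
    (hXindep : ∀ n, iIndepFun (fun i : Fin n => X n (i + 1)) ℙ)
    (hXlaw : ∀ n i, 1 ≤ i → i ≤ n →
      Measure.map (X n i) ℙ = expMeasure (((n - i + 1 : ℕ) : ℝ) ^ 2))
    (Y : (n : ℕ) → ℕ → Ω n → ℝ)
    (hY : ∀ n k o, Y n k o = ∑ i ∈ Finset.Icc 1 k, X n i o)
    (Ξ : (n : ℕ) → ℕ → ℕ → ℝ)
    (hΞ : ∀ n κ k, Ξ n κ k = ∑ i ∈ Finset.Icc k (n - κ),
      (∫ o, Y n i o ∂(ℙ : Measure (Ω n))) ^ (1/d - 1))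
    (V : (n : ℕ) → ℕ → ℕ → Ω n → ℝ)
    (hV : ∀ n κ k o, V n κ k o = (Ξ n κ k) ^ 2 / d ^ 2
      * (X n k o - ∫ o', X n k o' ∂(ℙ : Measure (Ω n))) ^ 2) :
    ∃ C : ℝ, 0 < C ∧ ∀ n κ k : ℕ, 1 ≤ κ → κ ≤ n - 1 → 1 ≤ k → k ≤ n - κ →
      ∫ o, (V n κ k o) ^ r ∂(ℙ : Measure (Ω n))
        ≤ C * ((n - k + 1 : ℕ) : ℝ) ^ (-(2 * r : ℝ) / d) :=
  stmt_9_general d hd r Ω X hXmeas hXlaw Y hY Ξ hΞ V hV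
end

section
/- For every r > 0 and d > 0 there is a constant C > 0, depending only on r and d, such that for all n ≥ 1 and all 0 ≤ k < n: E[Y_{n−k}^{r/d}] ≤ (n/(k+1)²)^{r/d} (1 + C/n). -/
/-!
The first `m = n - k` summands of `Y_{n-k}` are independent exponentials whose rates
`(n - i + 1)²` are all at least `Θ = (k + 1)²`. Each summand therefore has `q`-th moment at most
`q! / Θ^q`, and expanding `(S + X)^q` binomially and using independence shows by induction that
`E[Y_m^p] ≤ m (m + 1) ⋯ (m + p - 1) / Θ^p` for every integer `p` (the `p`-th moment of a
`Gamma(m, Θ)` variable). Lyapunov's inequality with `p = ⌈r/d⌉` gives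
`E[Y_m^{r/d}] ≤ ((n + p) / Θ)^{r/d} = (n / Θ)^{r/d} (1 + p/n)^{r/d}`, and
`(1 + p/n)^{r/d} ≤ 1 + C/n` with `C = (r/d) p e^{(r/d) p}`.
-/

open MeasureTheory ProbabilityTheory Filter Real Finset Nat
open scoped ProbabilityTheory ENNReal

theorem Nat.sum_choose_mul_ascFactorial_mul_factorial (j q : ℕ) :
    ∑ a ∈ range (q + 1), q.choose a * j.ascFactorial a * (q - a)! = (j + 1).ascFactorial q := by
  induction q with
  | zero => simp
  | succ q ih =>
    have hterm : ∀ a ∈ range (q + 1), (q + 1).choose a * j.ascFactorial a * (q + 1 - a)! =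
        (q + 1) * (q.choose a * j.ascFactorial a * (q - a)!) := by
      intro a ha
      have haq : a ≤ q := Nat.lt_succ_iff.mp (mem_range.mp ha)
      have hchoose : (q + 1).choose a * (q + 1 - a) = (q + 1) * q.choose a := by
        rw [← Nat.choose_succ_right_eq, Nat.add_one_mul_choose_eq]
      rw [Nat.sub_add_comm haq, Nat.factorial_succ, ← Nat.sub_add_comm haq]
      calc (q + 1).choose a * j.ascFactorial a * ((q + 1 - a) * (q - a)!)
          = (q + 1).choose a * (q + 1 - a) * (j.ascFactorial a * (q - a)!) := by ring
        _ = _ := by rw [hchoose]; ring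
    rw [sum_range_succ, sum_congr rfl hterm, ← mul_sum, ih, Nat.choose_self, Nat.sub_self,
      Nat.ascFactorial_succ, ← Nat.succ_ascFactorial, Nat.ascFactorial_succ]
    simp only [factorial_zero, succ_eq_add_one]
    ring

theorem Finset.sum_Icc_one_eq_sum_fin {M : Type*} [AddCommMonoid M] (g : ℕ → M) (m : ℕ) :
    ∑ i ∈ Icc 1 m, g i = ∑ i : Fin m, g (i + 1) := by
  rw [Fin.sum_univ_eq_sum_range (fun i => g (i + 1)), range_eq_Ico, sum_Ico_add' g, zero_add,
    Ico_add_one_right_eq_Icc]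

theorem Real.one_add_div_rpow_le {a t n : ℝ} (ha : 0 ≤ a) (ht : 0 ≤ t) (hn : 1 ≤ n) :
    (1 + a / n) ^ t ≤ 1 + t * a * exp (t * a) / n := by
  set x := t * a / n with hx_def
  have hx : 0 ≤ x := by positivity
  have hexp_le : exp x ≤ 1 + x * exp x := by
    nlinarith [add_one_le_exp (-x), exp_pos x, exp_neg x, mul_inv_cancel₀ (exp_pos x).ne']
  calc (1 + a / n) ^ t ≤ exp (a / n) ^ t := by
        gcongr
        linarith [add_one_le_exp (a / n)]
    _ = exp x := by rw [← exp_mul, hx_def]; ring_nf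
    _ ≤ 1 + x * exp x := hexp_le
    _ ≤ 1 + x * exp (t * a) := by
        gcongr
        exact div_le_self (by positivity) hn
    _ = 1 + t * a * exp (t * a) / n := by rw [hx_def]; ring

theorem ascFactorial_div_pow_rpow_le {m n p : ℕ} (hmn : m ≤ n) (hn : 1 ≤ n) (hp : 0 < p)
    {Θ t : ℝ} (hΘ : 0 < Θ) (ht : 0 < t) :
    ((m.ascFactorial p : ℝ) / Θ ^ p) ^ (t / p) ≤ (n / Θ) ^ t * (1 + t * p * exp (t * p) / n) := by
  have hasc : (m.ascFactorial p : ℝ) ≤ ((n + p : ℕ) : ℝ) ^ p := by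
    obtain ⟨n', rfl⟩ : ∃ n', n = n' + 1 := ⟨n - 1, by omega⟩
    exact_mod_cast (Nat.ascFactorial_le p hmn).trans
      ((Nat.ascFactorial_le_pow_add n' p).trans (Nat.pow_le_pow_left (by omega) p))
  have hn' : (0 : ℝ) < n := by exact_mod_cast hn
  calc ((m.ascFactorial p : ℝ) / Θ ^ p) ^ (t / p) ≤ ((((n + p : ℕ) : ℝ) / Θ) ^ p) ^ (t / p) := by
        rw [div_pow]
        gcongr
    _ = (n / Θ) ^ t * (1 + p / n) ^ t := by
        rw [← rpow_natCast_mul (by positivity), ← mul_rpow (by positivity) (by positivity)]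
        congr 1
        · push_cast
          field_simp
        · field_simp
    _ ≤ (n / Θ) ^ t * (1 + t * p * exp (t * p) / n) := by
        gcongr
        exact one_add_div_rpow_le (by positivity) ht.le (by exact_mod_cast hn)

theorem MeasureTheory.lintegral_rpow_le_lintegral_rpow_rpow {Ω : Type*} [MeasurableSpace Ω]
    {μ : Measure Ω} [IsProbabilityMeasure μ] {g : Ω → ℝ≥0∞} (hg : AEMeasurable g μ) {s p : ℝ}
    (hs : 0 < s) (hsp : s ≤ p) :
    ∫⁻ ω, g ω ^ s ∂μ ≤ (∫⁻ ω, g ω ^ p ∂μ) ^ (s / p) := by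
  have h := ENNReal.rpow_le_rpow
    (eLpNorm'_le_eLpNorm'_of_exponent_le hs hsp μ hg.aestronglyMeasurable) hs.le
  simp only [eLpNorm'_eq_lintegral_enorm, enorm_eq_self, ← ENNReal.rpow_mul] at h
  rwa [one_div_mul_cancel hs.ne', ENNReal.rpow_one, one_div_mul_eq_div] at h

theorem ProbabilityTheory.gammaMeasure_Iio_zero (a l : ℝ) : gammaMeasure a l (Set.Iio 0) = 0 := by
  rw [gammaMeasure, withDensity_apply _ measurableSet_Iio]
  exact lintegral_gammaPDF_of_nonpos le_rfl

theorem ProbabilityTheory.ae_nonneg_of_map_eq_gammaMeasure {Ω : Type*} [MeasurableSpace Ω]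
    {μ : Measure Ω} {X : Ω → ℝ} (hX : Measurable X) {a l : ℝ}
    (hlaw : μ.map X = gammaMeasure a l) : ∀ᵐ ω ∂μ, 0 ≤ X ω := by
  refine ae_of_ae_map hX.aemeasurable ?_
  rw [hlaw, ae_iff]
  simp only [not_le]
  exact gammaMeasure_Iio_zero a l

theorem ProbabilityTheory.lintegral_ofReal_pow_gammaMeasure {a l : ℝ} (ha : 0 < a) (hl : 0 < l)
    (q : ℕ) :
    ∫⁻ x, ENNReal.ofReal x ^ q ∂gammaMeasure a l
      = ENNReal.ofReal (Gamma (a + q) / (Gamma a * l ^ q)) := by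
  have hpdf : ∀ᵐ x ∂(volume : Measure ℝ), gammaPDF a l x * ENNReal.ofReal x ^ q
      = ENNReal.ofReal (Gamma (a + q) / (Gamma a * l ^ q)) * gammaPDF (a + q) l x := by
    filter_upwards [Measure.ae_ne volume 0] with x hx0
    rcases lt_or_gt_of_ne hx0 with hx | hx
    · simp [gammaPDF_of_neg hx]
    · rw [gammaPDF_of_nonneg hx.le, gammaPDF_of_nonneg hx.le, ← ENNReal.ofReal_pow hx.le,
        ← ENNReal.ofReal_mul (by positivity), ← ENNReal.ofReal_mul (by positivity)]
      congr 1
      have hΓ := (Gamma_pos_of_pos (s := a + q) (by positivity)).ne'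
      rw [show a + q - 1 = (a - 1) + q by ring, rpow_add_natCast hx.ne', rpow_add_natCast hl.ne']
      field_simp
  have hmeas (b : ℝ) : Measurable (gammaPDF b l) := (measurable_gammaPDFReal b l).ennreal_ofReal
  rw [gammaMeasure, lintegral_withDensity_eq_lintegral_mul _ (hmeas a) (by fun_prop)]
  simp only [Pi.mul_apply]
  rw [lintegral_congr_ae hpdf, lintegral_const_mul _ (hmeas _),
    lintegral_gammaPDF_eq_one (by positivity) hl, mul_one]

theorem ProbabilityTheory.lintegral_ofReal_pow_expMeasure {l : ℝ} (hl : 0 < l) (q : ℕ) :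
    ∫⁻ x, ENNReal.ofReal x ^ q ∂expMeasure l = ENNReal.ofReal (q ! / l ^ q) := by
  rw [expMeasure, lintegral_ofReal_pow_gammaMeasure one_pos hl, add_comm, Gamma_nat_eq_factorial,
    Gamma_one, one_mul]

theorem ProbabilityTheory.lintegral_ofReal_pow_le_of_map_eq_expMeasure {Ω : Type*}
    [MeasurableSpace Ω] {μ : Measure Ω} {X : Ω → ℝ} (hX : Measurable X) {l : ℝ}
    (hlaw : μ.map X = expMeasure l) {θ : ℝ} (hθ : 0 < θ) (hθl : θ ≤ l) (q : ℕ) :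
    ∫⁻ ω, ENNReal.ofReal (X ω) ^ q ∂μ ≤ q ! * ENNReal.ofReal θ⁻¹ ^ q := by
  rw [← lintegral_map (f := fun x => ENNReal.ofReal x ^ q) (by fun_prop) hX, hlaw,
    lintegral_ofReal_pow_expMeasure (hθ.trans_le hθl), ← ENNReal.ofReal_natCast,
    ← ENNReal.ofReal_pow (by positivity), ← ENNReal.ofReal_mul (by positivity), inv_pow,
    ← div_eq_mul_inv]
  gcongr

theorem ProbabilityTheory.lintegral_sum_pow_le_ascFactorial_mul {Ω ι : Type*}
    [MeasurableSpace Ω] {μ : Measure Ω} {f : ι → Ω → ℝ≥0∞} (hf : ∀ i, Measurable (f i))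
    (hindep : iIndepFun f μ) {c : ℝ≥0∞} (s : Finset ι)
    (hmom : ∀ i ∈ s, ∀ q : ℕ, ∫⁻ ω, f i ω ^ q ∂μ ≤ q ! * c ^ q) (q : ℕ) :
    ∫⁻ ω, (∑ i ∈ s, f i ω) ^ q ∂μ ≤ (#s).ascFactorial q * c ^ q := by
  have := hindep.isProbabilityMeasure
  classical
  induction s using Finset.induction_on generalizing q with
  | empty => cases q <;> simp
  | insert i s hi ih =>
    set S : Ω → ℝ≥0∞ := fun ω => ∑ j ∈ s, f j ω
    have hS : Measurable S := Finset.measurable_sum s fun j _ => hf j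
    have hSi : IndepFun S (f i) μ := by
      simpa [S, Finset.sum_fn] using hindep.indepFun_finsetSum_of_notMem hf hi
    calc ∫⁻ ω, (∑ j ∈ insert i s, f j ω) ^ q ∂μ
        = ∑ a ∈ range (q + 1), ∫⁻ ω, S ω ^ a * f i ω ^ (q - a) * q.choose a ∂μ := by
          simp_rw [sum_insert hi, add_comm (f i _), add_pow]
          exact lintegral_finsetSum _ fun a _ => by fun_prop
      _ = ∑ a ∈ range (q + 1), (∫⁻ ω, S ω ^ a ∂μ) * (∫⁻ ω, f i ω ^ (q - a) ∂μ) * q.choose a := by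
          refine sum_congr rfl fun a _ => ?_
          rw [lintegral_mul_const _ (by fun_prop)]
          congr 1
          exact lintegral_mul_eq_lintegral_mul_lintegral_of_indepFun'' (by fun_prop) (by fun_prop)
            (hSi.comp (measurable_id.pow_const a) (measurable_id.pow_const (q - a)))
      _ ≤ ∑ a ∈ range (q + 1),
            (#s).ascFactorial a * c ^ a * ((q - a)! * c ^ (q - a)) * q.choose a := by
          gcongr with a
          · exact ih (fun j hj => hmom j (mem_insert_of_mem hj)) a
          · exact hmom i (mem_insert_self i s) (q - a)
      _ = (#(insert i s)).ascFactorial q * c ^ q := by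
          rw [card_insert_of_notMem hi, ← Nat.sum_choose_mul_ascFactorial_mul_factorial,
            Nat.cast_sum, sum_mul]
          refine sum_congr rfl fun a ha => ?_
          rw [← pow_mul_pow_sub c (Nat.lt_succ_iff.mp (mem_range.mp ha))]
          push_cast
          ring

theorem ProbabilityTheory.integral_sum_rpow_le_of_map_eq_expMeasure {Ω ι : Type*}
    [MeasurableSpace Ω] {μ : Measure Ω} {X : ι → Ω → ℝ} (hX : ∀ i, Measurable (X i))
    (hindep : iIndepFun X μ) {s : Finset ι} {rate : ι → ℝ}
    (hlaw : ∀ i ∈ s, μ.map (X i) = expMeasure (rate i)) {θ : ℝ} (hθ : 0 < θ)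
    (hrate : ∀ i ∈ s, θ ≤ rate i) {t : ℝ} (ht : 0 < t) {p : ℕ} (htp : t ≤ p) :
    ∫ ω, (∑ i ∈ s, X i ω) ^ t ∂μ ≤ ((#s).ascFactorial p / θ ^ p) ^ (t / p) := by
  have := hindep.isProbabilityMeasure
  have hsum := lintegral_sum_pow_le_ascFactorial_mul (fun i => (hX i).ennreal_ofReal)
    (hindep.comp _ fun _ => ENNReal.measurable_ofReal) s
    (fun i hi => lintegral_ofReal_pow_le_of_map_eq_expMeasure (hX i) (hlaw i hi) hθ (hrate i hi))
    p
  have hnonneg : ∀ᵐ ω ∂μ, ∀ i ∈ s, 0 ≤ X i ω :=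
    (eventually_all_finset s).mpr fun i hi => ae_nonneg_of_map_eq_gammaMeasure (hX i) (hlaw i hi)
  -- `Real.rpow` is junk at negative bases, so the integrand is only a.e. nonnegative
  have hsum_nonneg : ∀ᵐ ω ∂μ, 0 ≤ ∑ i ∈ s, X i ω := by
    filter_upwards [hnonneg] with ω hω using sum_nonneg hω
  rw [integral_eq_lintegral_of_nonneg_ae
    (by filter_upwards [hsum_nonneg] with ω hω using rpow_nonneg hω t)
    ((Finset.measurable_sum s fun i _ => hX i).pow_const t).aestronglyMeasurable]
  refine ENNReal.toReal_le_of_le_ofReal (by positivity) ?_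
  calc ∫⁻ ω, ENNReal.ofReal ((∑ i ∈ s, X i ω) ^ t) ∂μ
        = ∫⁻ ω, (∑ i ∈ s, ENNReal.ofReal (X i ω)) ^ t ∂μ := by
        refine lintegral_congr_ae ?_
        filter_upwards [hnonneg, hsum_nonneg] with ω hω hω'
        rw [← ENNReal.ofReal_rpow_of_nonneg hω' ht.le, ENNReal.ofReal_sum_of_nonneg hω]
    _ ≤ (∫⁻ ω, (∑ i ∈ s, ENNReal.ofReal (X i ω)) ^ (p : ℝ) ∂μ) ^ (t / p) :=
        lintegral_rpow_le_lintegral_rpow_rpow (by fun_prop) ht htp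
    _ ≤ ((#s).ascFactorial p * ENNReal.ofReal θ⁻¹ ^ p) ^ (t / p) := by
        simp only [ENNReal.rpow_natCast]
        gcongr
    _ = ENNReal.ofReal (((#s).ascFactorial p / θ ^ p) ^ (t / p)) := by
        rw [← ENNReal.ofReal_natCast, ← ENNReal.ofReal_pow (by positivity),
          ← ENNReal.ofReal_mul (by positivity), ENNReal.ofReal_rpow_of_nonneg (by positivity)
            (by positivity), inv_pow, ← div_eq_mul_inv]

theorem stmt_11_general
    (d r : ℝ) (hd : 0 < d) (hr : 0 < r)
    (Ω : ℕ → Type) [∀ n, MeasureSpace (Ω n)]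
    (X : (n : ℕ) → ℕ → Ω n → ℝ)
    (hXmeas : ∀ n i, Measurable (X n i))
    (hXindep : ∀ n, iIndepFun (fun i : Fin n => X n (i + 1)) ℙ)
    (hXlaw : ∀ n i, 1 ≤ i → i ≤ n →
      Measure.map (X n i) ℙ = expMeasure (((n - i + 1 : ℕ) : ℝ) ^ 2))
    (Y : (n : ℕ) → ℕ → Ω n → ℝ)
    (hY : ∀ n k o, Y n k o = ∑ i ∈ Finset.Icc 1 k, X n i o) :
    ∃ C : ℝ, 0 < C ∧ ∀ n k : ℕ, 1 ≤ n → k < n →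
      ∫ o, (Y n (n - k) o) ^ (r / d) ∂(ℙ : Measure (Ω n))
        ≤ ((n : ℝ) / ((k : ℝ) + 1) ^ 2) ^ (r / d) * (1 + C / n) := by
  have hs : 0 < r / d := div_pos hr hd
  set p := ⌈r / d⌉₊
  have hp : 0 < p := Nat.ceil_pos.mpr hs
  refine ⟨r / d * p * exp (r / d * p), by positivity, fun n k hn _ => ?_⟩
  set S : Finset (Fin n) := univ.map (Fin.castLEEmb (Nat.sub_le n k))
  have hYS (o : Ω n) : Y n (n - k) o = ∑ i ∈ S, X n (i + 1) o := by
    simp [S, hY, sum_Icc_one_eq_sum_fin]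
  have hcard : #S = n - k := by simp [S]
  have hrate : ∀ i ∈ S, ((k : ℝ) + 1) ^ 2 ≤ ((n - (i + 1) + 1 : ℕ) : ℝ) ^ 2 := by
    intro i hi
    obtain ⟨j, -, rfl⟩ := mem_map.mp hi
    have : k + 1 ≤ n - (j + 1) + 1 := by omega
    gcongr
    exact_mod_cast this
  calc ∫ o, Y n (n - k) o ^ (r / d) = ∫ o, (∑ i ∈ S, X n (i + 1) o) ^ (r / d) := by
        simp_rw [hYS]
    _ ≤ ((#S).ascFactorial p / (((k : ℝ) + 1) ^ 2) ^ p) ^ (r / d / p) :=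
        integral_sum_rpow_le_of_map_eq_expMeasure (fun i => hXmeas n _) (hXindep n)
          (fun i _ => hXlaw n _ (by omega) (by omega)) (by positivity) hrate hs (Nat.le_ceil _)
    _ ≤ _ := by
        rw [hcard]
        exact ascFactorial_div_pow_rpow_le (Nat.sub_le n k) hn hp (by positivity) hs

/-- Lemma: crude moment bound for `Y_{n−k}`.
For every `r > 0` and `d > 0` there is `C > 0` (depending only on `r, d`) such that
for all `n ≥ 1` and `0 ≤ k < n`:
`E[Y_{n−k}^{r/d}] ≤ (n/(k+1)²)^{r/d} (1 + C/n)`. -/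
theorem stmt_11
    (d r : ℝ) (hd : 0 < d) (hr : 0 < r)
    (Ω : ℕ → Type) [∀ n, MeasureSpace (Ω n)]
    (hprob : ∀ n, IsProbabilityMeasure (ℙ : Measure (Ω n)))
    (X : (n : ℕ) → ℕ → Ω n → ℝ)
    (hXmeas : ∀ n i, Measurable (X n i))
    (hXindep : ∀ n, iIndepFun (fun i : Fin n => X n (i + 1)) ℙ)
    (hXlaw : ∀ n i, 1 ≤ i → i ≤ n →
      Measure.map (X n i) ℙ = expMeasure (((n - i + 1 : ℕ) : ℝ) ^ 2))
    (Y : (n : ℕ) → ℕ → Ω n → ℝ)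
    (hY : ∀ n k o, Y n k o = ∑ i ∈ Finset.Icc 1 k, X n i o) :
    ∃ C : ℝ, 0 < C ∧ ∀ n k : ℕ, 1 ≤ n → k < n →
      ∫ o, (Y n (n - k) o) ^ (r / d) ∂(ℙ : Measure (Ω n))
        ≤ ((n : ℝ) / ((k : ℝ) + 1) ^ 2) ^ (r / d) * (1 + C / n) :=
  stmt_11_general d r hd hr Ω X hXmeas hXindep hXlaw Y hY
end
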